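/- Let T be a (d₁,d₂)-biregular tree with d₁,d₂ ≥ 3 and Γ ≤ Aut(T) a geometrically finite tree lattice with finite part F. For the associated Markov chain (Mₙ), let τ = min{n ∈ ℕ : ∂₁(Mₙ) ∈ F} be the first hitting time of F, and τ′ = min{n ∈ ℕ : n ≥ τ and 2 | n}. Set q + 1 = min{d₁, d₂}. Then for every e ∈ EQ and i ∈ ℕ: ℙ_e(τ = i) ≤ q^{⌈(|e|−i)/2⌉} if i ≥ |e|, and ℙ_e(τ = i) = 0 if i < |e|. Moreover, the same bound holds for τ′ up to a multiplicative constant C = C(d₁,d₂). -/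

import Mathlib

open Filter Topology MeasureTheory

attribute [local instance] Classical.propDecidable

namespace TreeDyn


variable {V : Type*}

/-- The type of directed edges of a simple graph. -/
def DEdge (T : SimpleGraph V) : Type _ := {p : V × V // T.Adj p.1 p.2}

/-- `T` is a `(d₁,d₂)`-biregular tree: a tree whose vertex set admits a bipartition such
that every vertex of one class has degree `d₁` and every vertex of the other class has
degree `d₂`. -/
def IsBiregularTree (T : SimpleGraph V) (d₁ d₂ : ℕ) : Prop :=
  T.Connected ∧ T.IsAcyclic ∧
    ∃ c : V → Bool,
      (∀ u v, T.Adj u v → c u ≠ c v) ∧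
      (∀ v, c v = true → Nat.card (T.neighborSet v) = d₁) ∧
      (∀ v, c v = false → Nat.card (T.neighborSet v) = d₂)

/-- A permutation of the vertices is an automorphism of `T` acting without edge
inversion if it preserves adjacency and moves every vertex an even distance. -/
def IsTreeAut (T : SimpleGraph V) (σ : Equiv.Perm V) : Prop :=
  (∀ u v, T.Adj (σ u) (σ v) ↔ T.Adj u v) ∧ ∀ v, Even (T.dist v (σ v))

variable (T : SimpleGraph V) (Λ : Subgroup (Equiv.Perm V))

/-- Two vertices are related if they lie in the same `Λ`-orbit. -/
def vrel (u v : V) : Prop := ∃ γ ∈ Λ, γ u = v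

/-- The vertex set of the quotient graph `Q = Λ∖T`. -/
def VQ := Quot (vrel Λ)

/-- Projection of vertices to the quotient graph. -/
def πV : V → VQ Λ := Quot.mk _

/-- Two directed edges are related if they lie in the same `Λ`-orbit. -/
def erel (e f : DEdge T) : Prop :=
  ∃ γ ∈ Λ, γ e.1.1 = f.1.1 ∧ γ e.1.2 = f.1.2

/-- The directed edge set of the quotient graph `Q = Λ∖T`. -/
def EQ := Quot (erel T Λ)

/-- Projection of directed edges to the quotient graph. -/
def πE : DEdge T → EQ T Λ := Quot.mk _

/-- The initial vertex `∂₀ e` of a quotient edge. -/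
noncomputable def tailQ (e : EQ T Λ) : VQ Λ := πV Λ (Quot.out e).1.1

/-- The terminal vertex `∂₁ e` of a quotient edge. -/
noncomputable def headQ (e : EQ T Λ) : VQ Λ := πV Λ (Quot.out e).1.2

/-- The reversal `ē` of a quotient edge. -/
noncomputable def barQ (e : EQ T Λ) : EQ T Λ :=
  πE T Λ ⟨((Quot.out e).1.2, (Quot.out e).1.1), (Quot.out e).2.symm⟩

/-- The order of the stabilizer of a vertex in `Λ`. -/
noncomputable def stabV (v : V) : ℕ :=
  Nat.card {γ : Λ // (γ : Equiv.Perm V) v = v}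

/-- The order of the pointwise stabilizer of a directed edge in `Λ`. -/
noncomputable def stabE (e : DEdge T) : ℕ :=
  Nat.card {γ : Λ // (γ : Equiv.Perm V) e.1.1 = e.1.1 ∧ (γ : Equiv.Perm V) e.1.2 = e.1.2}

/-- The index map of the edge-indexed graph: `ind e = [Λ_{∂₀ẽ} : Λ_ẽ]` for any lift `ẽ`. -/
noncomputable def indQ (e : EQ T Λ) : ℕ :=
  stabV Λ (Quot.out e).1.1 / stabE T Λ (Quot.out e)

/-- The degree of a vertex of the quotient graph: the degree in `T` of any of its lifts. -/
noncomputable def degQ (v : VQ Λ) : ℕ := Nat.card (T.neighborSet (Quot.out v))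

/-- `Δ(e) = ind(ē)/ind(e)`. -/
noncomputable def deltaQ (e : EQ T Λ) : ℝ :=
  (indQ T Λ (barQ T Λ e) : ℝ) / (indQ T Λ e : ℝ)

/-- `Λ` is a tree lattice: a discrete subgroup (finite vertex stabilizers) of `Aut T`
with finite covolume, i.e. `Σ_{v ∈ VQ} N_o(v)⁻¹ < ∞` where `N_o` is the multiplicative
function along paths determined by `Δ`. -/
def IsTreeLattice : Prop :=
  (∀ γ ∈ Λ, IsTreeAut T γ) ∧
  (∀ v : V, Finite {γ : Λ // (γ : Equiv.Perm V) v = v}) ∧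
  ∃ (o : VQ Λ) (N : VQ Λ → ℝ),
    N o = 1 ∧ (∀ v, 0 < N v) ∧
    (∀ e : EQ T Λ, N (headQ T Λ e) = deltaQ T Λ e * N (tailQ T Λ e)) ∧
    Summable (fun v : VQ Λ => (N v)⁻¹)

/-- The transition kernel of the Markov chain associated to `Λ` on the directed edges
of the quotient graph. -/
noncomputable def kerP (e f : EQ T Λ) : ℝ :=
  if headQ T Λ e = tailQ T Λ f then
    (if f = barQ T Λ e then ((indQ T Λ f : ℝ) - 1) else (indQ T Λ f : ℝ)) /
      ((degQ T Λ (headQ T Λ e) : ℝ) - 1)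
  else 0

/-- The `n`-step transition kernel. -/
noncomputable def kerPn : ℕ → EQ T Λ → EQ T Λ → ℝ
  | 0, e, f => if e = f then 1 else 0
  | n + 1, e, f => ∑' g : EQ T Λ, kerPn n e g * kerP T Λ g f

/-- Adjacency in the quotient graph. -/
def AdjQ (u v : VQ Λ) : Prop :=
  ∃ e : EQ T Λ, tailQ T Λ e = u ∧ headQ T Λ e = v

/-- Graph distance on the quotient graph. -/
noncomputable def distQ (u v : VQ Λ) : ℕ :=
  sInf {n : ℕ | ∃ f : ℕ → VQ Λ, f 0 = u ∧ f n = v ∧ ∀ i < n, AdjQ T Λ (f i) (f (i + 1))}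

/-- Distance from a finite set of vertices of the quotient graph. -/
noncomputable def distToF (F : Finset (VQ Λ)) (v : VQ Λ) : ℕ :=
  sInf {n : ℕ | ∃ u ∈ F, distQ T Λ u v = n}

/-- `F` is a finite part for `Λ`: the complement of `F` in the quotient graph is a
disjoint union of finitely many open Nagao rays. -/
def IsFinitePart (F : Finset (VQ Λ)) : Prop :=
  ∃ (k : ℕ) (ray : Fin k → ℕ → VQ Λ),
    (∀ v : VQ Λ, v ∉ F ↔ ∃ i n, ray i n = v) ∧
    (∀ i n j m, ray i n = ray j m → i = j ∧ n = m) ∧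
    (∀ i n, ∃ e : EQ T Λ, tailQ T Λ e = ray i n ∧ headQ T Λ e = ray i (n + 1)) ∧
    (∀ i n, ∀ e f : EQ T Λ, tailQ T Λ e = ray i n → headQ T Λ e = ray i (n + 1) →
      tailQ T Λ f = ray i n → headQ T Λ f = ray i (n + 1) → e = f) ∧
    (∀ i n, ∀ e : EQ T Λ, tailQ T Λ e = ray i n → headQ T Λ e ∉ F →
      headQ T Λ e = ray i (n + 1) ∨ ∃ m, n = m + 1 ∧ headQ T Λ e = ray i m) ∧
    (∀ i n, ∀ e : EQ T Λ, tailQ T Λ e = ray i n → headQ T Λ e = ray i (n + 1) →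
      indQ T Λ e = 1) ∧
    (∀ i n, ∀ e : EQ T Λ, tailQ T Λ e = ray i (n + 1) → headQ T Λ e = ray i n →
      indQ T Λ e = degQ T Λ (ray i n) - 1)

/-- A tree lattice is geometrically finite if its quotient graph contains a nonempty
finite subgraph whose complement is a disjoint union of finitely many open Nagao rays. -/
def IsGeomFinite : Prop := ∃ F : Finset (VQ Λ), F.Nonempty ∧ IsFinitePart T Λ F

/-- The mass that the projection to `VQ` of the uniform measure on the sphere
`S(vb,n)` gives to the vertex `q` of the quotient graph. -/
noncomputable def sphPush (vb : V) (n : ℕ) (q : VQ Λ) : ℝ :=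
  (Nat.card {w : V // T.dist vb w = n ∧ πV Λ w = q} : ℝ) /
    (Nat.card {w : V // T.dist vb w = n} : ℝ)

/-- `ℙ_e(τ = i)` : the probability that the Markov chain started at `e` hits the set of
edges with terminal vertex in `F` for the first time at time `i`. -/
noncomputable def hitP (F : Finset (VQ Λ)) : ℕ → EQ T Λ → ℝ
  | 0, e => if headQ T Λ e ∈ F then 1 else 0
  | i + 1, e => if headQ T Λ e ∈ F then 0 else ∑' f : EQ T Λ, kerP T Λ e f * hitP F i f

/-- `ℙ_e(τ' = i)` where `τ' = min {n | n ≥ τ, 2 ∣ n}`. -/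
noncomputable def hitP' (F : Finset (VQ Λ)) (i : ℕ) (e : EQ T Λ) : ℝ :=
  if 2 ∣ i then hitP T Λ F i e + (if 1 ≤ i then hitP T Λ F (i - 1) e else 0) else 0

/-- `(Ω₀, Ω₁)` is the pair of cyclic classes of the (period two) kernel `P`. -/
def IsCyclicPair (Ω₀ Ω₁ : Set (EQ T Λ)) : Prop :=
  (∀ e, e ∈ Ω₀ ∨ e ∈ Ω₁) ∧ (∀ e, ¬(e ∈ Ω₀ ∧ e ∈ Ω₁)) ∧
  (∀ e ∈ Ω₀, ∀ f, kerP T Λ e f ≠ 0 → f ∈ Ω₁) ∧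
  (∀ e ∈ Ω₁, ∀ f, kerP T Λ e f ≠ 0 → f ∈ Ω₀)

/-- `Ω` is a cyclic class of the kernel `P`. -/
def IsCyclicClass (Ω : Set (EQ T Λ)) : Prop :=
  ∃ Ω', IsCyclicPair T Λ Ω Ω' ∨ IsCyclicPair T Λ Ω' Ω


/-! ### Auxiliary infrastructure -/

section Aux

theorem _root_.Equiv.Perm.inv_apply_self {α : Type*} (f : Equiv.Perm α) (x : α) :
    f⁻¹ (f x) = x := Equiv.symm_apply_apply f x

theorem _root_.Equiv.Perm.apply_inv_self {α : Type*} (f : Equiv.Perm α) (x : α) :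
    f (f⁻¹ x) = x := Equiv.apply_symm_apply f x

variable {V : Type*} {T : SimpleGraph V} {Λ : Subgroup (Equiv.Perm V)}

lemma vrel_equivalence : Equivalence (vrel Λ) := by
  constructor
  · exact fun x => ⟨1, Λ.one_mem, rfl⟩
  · rintro x y ⟨γ, hγ, rfl⟩
    exact ⟨γ⁻¹, Λ.inv_mem hγ, Equiv.Perm.inv_apply_self γ x⟩
  · rintro x y z ⟨γ, hγ, rfl⟩ ⟨δ, hδ, rfl⟩
    exact ⟨δ * γ, Λ.mul_mem hδ hγ, Equiv.Perm.mul_apply δ γ x⟩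

lemma erel_equivalence : Equivalence (erel T Λ) := by
  constructor
  · exact fun x => ⟨1, Λ.one_mem, rfl, rfl⟩
  · rintro x y ⟨γ, hγ, h1, h2⟩
    exact ⟨γ⁻¹, Λ.inv_mem hγ, by rw [← h1]; exact Equiv.Perm.inv_apply_self γ _,
      by rw [← h2]; exact Equiv.Perm.inv_apply_self γ _⟩
  · rintro x y z ⟨γ, hγ, h1, h2⟩ ⟨δ, hδ, h3, h4⟩
    exact ⟨δ * γ, Λ.mul_mem hδ hγ, by simp [Equiv.Perm.mul_apply, h1, h3],
      by simp [Equiv.Perm.mul_apply, h2, h4]⟩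

lemma πV_eq_iff {a b : V} : πV Λ a = πV Λ b ↔ vrel Λ a b :=
  ⟨fun h => vrel_equivalence.eqvGen_iff.mp (Quot.eqvGen_exact h),
   fun h => Quot.sound h⟩

lemma πE_eq_iff {a b : DEdge T} : πE T Λ a = πE T Λ b ↔ erel T Λ a b :=
  ⟨fun h => erel_equivalence.eqvGen_iff.mp (Quot.eqvGen_exact h),
   fun h => Quot.sound h⟩

lemma πV_out (v : VQ Λ) : πV Λ (Quot.out v) = v := Quot.out_eq v
lemma πE_out (e : EQ T Λ) : πE T Λ (Quot.out e) = e := Quot.out_eq e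

lemma erel_out_πE (d : DEdge T) : erel T Λ (Quot.out (πE T Λ d)) d :=
  πE_eq_iff.mp (πE_out (πE T Λ d))

lemma tailQ_πE (d : DEdge T) : tailQ T Λ (πE T Λ d) = πV Λ d.1.1 := by
  obtain ⟨γ, hγ, h1, h2⟩ := erel_out_πE (Λ := Λ) d
  exact πV_eq_iff.mpr ⟨γ, hγ, h1⟩

lemma headQ_πE (d : DEdge T) : headQ T Λ (πE T Λ d) = πV Λ d.1.2 := by
  obtain ⟨γ, hγ, h1, h2⟩ := erel_out_πE (Λ := Λ) d
  exact πV_eq_iff.mpr ⟨γ, hγ, h2⟩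

lemma tailQ_barQ (e : EQ T Λ) : tailQ T Λ (barQ T Λ e) = headQ T Λ e := tailQ_πE _
lemma headQ_barQ (e : EQ T Λ) : headQ T Λ (barQ T Λ e) = tailQ T Λ e := headQ_πE _

/-! #### Stabilizer counting -/

noncomputable def conjStabEquiv (g : ↥Λ) (a : V) :
    {δ : ↥Λ // (δ : Equiv.Perm V) a = a} ≃
      {δ : ↥Λ // (δ : Equiv.Perm V) ((g : Equiv.Perm V) a) = (g : Equiv.Perm V) a} where
  toFun δ := ⟨g * δ.1 * g⁻¹, by
    simp [Equiv.Perm.mul_apply, Equiv.Perm.inv_apply_self, δ.2]⟩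
  invFun δ := ⟨g⁻¹ * δ.1 * g, by
    simp [Equiv.Perm.mul_apply, δ.2]⟩
  left_inv δ := Subtype.ext (by group)
  right_inv δ := Subtype.ext (by group)

noncomputable def conjStab2Equiv (g : ↥Λ) (a b : V) :
    {δ : ↥Λ // (δ : Equiv.Perm V) a = a ∧ (δ : Equiv.Perm V) b = b} ≃
      {δ : ↥Λ // (δ : Equiv.Perm V) ((g : Equiv.Perm V) a) = (g : Equiv.Perm V) a ∧
        (δ : Equiv.Perm V) ((g : Equiv.Perm V) b) = (g : Equiv.Perm V) b} where
  toFun δ := ⟨g * δ.1 * g⁻¹, by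
    constructor <;> simp [Equiv.Perm.mul_apply, Equiv.Perm.inv_apply_self, δ.2.1, δ.2.2]⟩
  invFun δ := ⟨g⁻¹ * δ.1 * g, by
    constructor <;> simp [Equiv.Perm.mul_apply, δ.2.1, δ.2.2]⟩
  left_inv δ := Subtype.ext (by group)
  right_inv δ := Subtype.ext (by group)

lemma stabV_conj {γ : Equiv.Perm V} (hγ : γ ∈ Λ) (a : V) :
    stabV Λ (γ a) = stabV Λ a :=
  (Nat.card_congr (conjStabEquiv (Λ := Λ) ⟨γ, hγ⟩ a)).symm

lemma stabE_conj {γ : Equiv.Perm V} (hγ : γ ∈ Λ) {E E' : DEdge T}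
    (h1 : γ E.1.1 = E'.1.1) (h2 : γ E.1.2 = E'.1.2) :
    stabE T Λ E' = stabE T Λ E := by
  unfold stabE
  rw [← h1, ← h2]
  exact (Nat.card_congr (conjStab2Equiv (Λ := Λ) ⟨γ, hγ⟩ E.1.1 E.1.2)).symm

lemma smul_eq_apply' (γ : ↥Λ) (x : V) : γ • x = (γ : Equiv.Perm V) x := rfl

lemma orbit_stab_count (a w : V) :
    Nat.card {x : V // ∃ γ, γ ∈ Λ ∧ γ a = a ∧ γ w = x} *
      Nat.card {γ : ↥Λ // (γ : Equiv.Perm V) a = a ∧ (γ : Equiv.Perm V) w = w} =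
      Nat.card {γ : ↥Λ // (γ : Equiv.Perm V) a = a} := by
  classical
  set K : Subgroup ↥Λ := MulAction.stabilizer ↥Λ a with hK
  have e1 : {γ : ↥Λ // (γ : Equiv.Perm V) a = a} ≃ ↥K :=
    Equiv.subtypeEquivRight (fun γ => by
      simp [hK, MulAction.mem_stabilizer_iff, smul_eq_apply'])
  have e2 : {γ : ↥Λ // (γ : Equiv.Perm V) a = a ∧ (γ : Equiv.Perm V) w = w} ≃
      ↥(MulAction.stabilizer ↥K w) := by
    refine ⟨fun γ => ⟨⟨γ.1, ?_⟩, ?_⟩, fun k => ⟨k.1.1, ?_, ?_⟩, fun _ => rfl, fun _ => rfl⟩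
    · simpa [hK, MulAction.mem_stabilizer_iff, smul_eq_apply'] using γ.2.1
    · simpa [MulAction.mem_stabilizer_iff, smul_eq_apply'] using γ.2.2
    · exact MulAction.mem_stabilizer_iff.mp k.1.2
    · exact MulAction.mem_stabilizer_iff.mp k.2
  have e3 : {x : V // ∃ γ, γ ∈ Λ ∧ γ a = a ∧ γ w = x} ≃ MulAction.orbit ↥K w := by
    refine Equiv.subtypeEquivRight (fun x => ?_)
    constructor
    · rintro ⟨γ, hγ, h1, h2⟩
      exact ⟨⟨⟨γ, hγ⟩, by simp [hK, MulAction.mem_stabilizer_iff, smul_eq_apply', h1]⟩,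
        by simp [smul_eq_apply', h2]⟩
    · rintro ⟨⟨⟨γ, hγ⟩, hst⟩, hx⟩
      refine ⟨γ, hγ, ?_, ?_⟩
      · simpa [hK, MulAction.mem_stabilizer_iff, smul_eq_apply'] using hst
      · simpa [smul_eq_apply'] using hx
  rw [Nat.card_congr e1, Nat.card_congr e2, Nat.card_congr e3,
    Nat.card_congr (MulAction.orbitEquivQuotientStabilizer ↥K w)]
  exact (Subgroup.card_eq_card_quotient_mul_card_subgroup _).symm

lemma stabE_pos (hΛfin : ∀ v : V, Finite {γ : Λ // (γ : Equiv.Perm V) v = v})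
    (E : DEdge T) : 0 < stabE T Λ E := by
  haveI := hΛfin E.1.1
  haveI : Finite {γ : Λ // (γ : Equiv.Perm V) E.1.1 = E.1.1 ∧ (γ : Equiv.Perm V) E.1.2 = E.1.2} :=
    Finite.of_injective
      (fun δ => (⟨δ.1, δ.2.1⟩ : {γ : Λ // (γ : Equiv.Perm V) E.1.1 = E.1.1}))
      (by intro x y h; have h' := congrArg Subtype.val h; exact Subtype.ext h')
  haveI : Nonempty {γ : Λ // (γ : Equiv.Perm V) E.1.1 = E.1.1 ∧ (γ : Equiv.Perm V) E.1.2 = E.1.2} :=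
    ⟨⟨1, by simp⟩⟩
  exact Nat.card_pos

lemma stabE_le_stabV (hΛfin : ∀ v : V, Finite {γ : Λ // (γ : Equiv.Perm V) v = v})
    (E : DEdge T) : stabE T Λ E ≤ stabV Λ E.1.1 := by
  haveI := hΛfin E.1.1
  exact Nat.card_le_card_of_injective
    (fun δ => (⟨δ.1, δ.2.1⟩ : {γ : Λ // (γ : Equiv.Perm V) E.1.1 = E.1.1}))
    (by intro x y h; have h' := congrArg Subtype.val h; exact Subtype.ext h')

lemma one_le_indQ (hΛfin : ∀ v : V, Finite {γ : Λ // (γ : Equiv.Perm V) v = v})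
    (f : EQ T Λ) : 1 ≤ indQ T Λ f := by
  unfold indQ
  rw [Nat.one_le_div_iff (stabE_pos hΛfin _)]
  exact stabE_le_stabV hΛfin _

/-! #### Degrees -/

variable {d₁ d₂ : ℕ}

lemma three_le_card_nbr (hd₁ : 3 ≤ d₁) (hd₂ : 3 ≤ d₂) (hT : IsBiregularTree T d₁ d₂) (x : V) :
    3 ≤ Nat.card (T.neighborSet x) := by
  obtain ⟨-, -, c, -, h1, h2⟩ := hT
  rcases Bool.eq_false_or_eq_true (c x) with h | h
  · rw [h1 x h]; exact hd₁
  · rw [h2 x h]; exact hd₂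

lemma three_le_degQ (hd₁ : 3 ≤ d₁) (hd₂ : 3 ≤ d₂) (hT : IsBiregularTree T d₁ d₂) (v : VQ Λ) :
    3 ≤ degQ T Λ v := three_le_card_nbr hd₁ hd₂ hT _

/-! #### The edge `Finset` at a vertex of the quotient and the index sum formula -/

lemma edge_finset_exists (hd₁ : 3 ≤ d₁) (hd₂ : 3 ≤ d₂) (hT : IsBiregularTree T d₁ d₂)
    (hΛaut : ∀ γ ∈ Λ, IsTreeAut T γ)
    (hΛfin : ∀ v : V, Finite {γ : Λ // (γ : Equiv.Perm V) v = v}) (v : VQ Λ) :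
    ∃ Fs : Finset (EQ T Λ), (∀ f, f ∈ Fs ↔ tailQ T Λ f = v) ∧
      ∑ f ∈ Fs, indQ T Λ f = degQ T Λ v := by
  classical
  set a := Quot.out v with ha
  have h3 := three_le_card_nbr hd₁ hd₂ hT a
  obtain ⟨hne, hfin⟩ := Nat.card_pos_iff.mp (by omega : 0 < Nat.card (T.neighborSet a))
  have hNfin : (T.neighborSet a).Finite := Set.toFinite _
  obtain ⟨w₀, hw₀⟩ := hne
  have hw₀' : T.Adj a w₀ := hw₀
  set φ : V → EQ T Λ := fun x =>
    if h : T.Adj a x then πE T Λ ⟨(a, x), h⟩ else πE T Λ ⟨(a, w₀), hw₀'⟩ with hφ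
  set s : Finset V := hNfin.toFinset with hs
  have hmem_s : ∀ x, x ∈ s ↔ T.Adj a x := by
    intro x; rw [hs, Set.Finite.mem_toFinset]; rfl
  refine ⟨s.image φ, ?_, ?_⟩
  · intro f
    constructor
    · intro hf
      obtain ⟨x, hx, rfl⟩ := Finset.mem_image.mp hf
      have hax : T.Adj a x := (hmem_s x).mp hx
      simp only [hφ, dif_pos hax]
      refine (tailQ_πE (Λ := Λ) (⟨(a, x), hax⟩ : DEdge T)).trans ?_
      exact πV_out v
    · intro hf
      set E := Quot.out f with hE
      have hπ : πV Λ E.1.1 = πV Λ a := by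
        have : tailQ T Λ f = πV Λ E.1.1 := rfl
        rw [← this, hf]; exact (πV_out v).symm
      obtain ⟨γ, hγ, hγ1⟩ := πV_eq_iff.mp hπ
      have hadj : T.Adj a (γ E.1.2) := by
        have h := (hΛaut γ hγ).1 E.1.1 E.1.2
        rw [hγ1] at h
        exact h.mpr E.2
      refine Finset.mem_image.mpr ⟨γ E.1.2, (hmem_s _).mpr hadj, ?_⟩
      simp only [hφ, dif_pos hadj]
      rw [← πE_out f]
      exact πE_eq_iff.mpr (erel_equivalence.symm ⟨γ, hγ, hγ1, rfl⟩)
  · have hcard := Finset.card_eq_sum_card_fiberwise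
      (fun x hx => Finset.mem_image_of_mem φ hx : ∀ x ∈ s, φ x ∈ s.image φ)
    have hdeg : s.card = degQ T Λ v := by
      rw [hs, ← Nat.card_eq_card_finite_toFinset hNfin]; rfl
    have hfiber : ∀ f ∈ s.image φ,
        (s.filter (fun x => φ x = f)).card = indQ T Λ f := by
      intro f hf
      obtain ⟨w, hws, hwf⟩ := Finset.mem_image.mp hf
      have hadjw : T.Adj a w := (hmem_s w).mp hws
      have hwf' : πE T Λ ⟨(a, w), hadjw⟩ = f := by
        rw [← hwf]; simp only [hφ, dif_pos hadjw]
      have hset : ∀ x, x ∈ s.filter (fun x => φ x = f) ↔ ∃ γ, γ ∈ Λ ∧ γ a = a ∧ γ w = x := by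
        intro x
        rw [Finset.mem_filter]
        constructor
        · rintro ⟨hxs, hxf⟩
          have hax : T.Adj a x := (hmem_s x).mp hxs
          simp only [hφ, dif_pos hax] at hxf
          obtain ⟨γ, hγ, h1, h2⟩ := πE_eq_iff.mp (hwf'.trans hxf.symm)
          exact ⟨γ, hγ, h1, h2⟩
        · rintro ⟨γ, hγ, h1, h2⟩
          have hax : T.Adj a x := by
            have h := (hΛaut γ hγ).1 a w
            rw [h1, h2] at h
            exact h.mpr hadjw
          refine ⟨(hmem_s x).mpr hax, ?_⟩
          simp only [hφ, dif_pos hax]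
          rw [← hwf']
          exact (πE_eq_iff.mpr ⟨γ, hγ, h1, h2⟩).symm
      have h1 : (s.filter (fun x => φ x = f)).card =
          Nat.card {x : V // ∃ γ, γ ∈ Λ ∧ γ a = a ∧ γ w = x} := by
        rw [← Nat.card_eq_finsetCard]
        exact Nat.card_congr (Equiv.subtypeEquivRight (fun x => hset x))
      have h2 := orbit_stab_count (Λ := Λ) a w
      have h3' : indQ T Λ f = stabV Λ a / stabE T Λ (⟨(a, w), hadjw⟩ : DEdge T) := by
        unfold indQ
        have herel : erel T Λ (Quot.out f) ⟨(a, w), hadjw⟩ := by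
          rw [← hwf']; exact erel_out_πE _
        obtain ⟨γ, hγ, hg1, hg2⟩ := herel
        have hg1' : γ (Quot.out f).1.1 = a := hg1
        have hv : stabV Λ (Quot.out f).1.1 = stabV Λ a := by
          rw [← hg1']; exact (stabV_conj hγ _).symm
        have he : stabE T Λ (Quot.out f) = stabE T Λ (⟨(a, w), hadjw⟩ : DEdge T) :=
          (stabE_conj hγ hg1 hg2).symm
        rw [hv, he]
      rw [h1, h3']
      have hb : 0 < stabE T Λ (⟨(a, w), hadjw⟩ : DEdge T) := stabE_pos hΛfin _
      have h2' : stabV Λ a =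
          Nat.card {x : V // ∃ γ, γ ∈ Λ ∧ γ a = a ∧ γ w = x} *
            stabE T Λ (⟨(a, w), hadjw⟩ : DEdge T) := h2.symm
      exact (Nat.div_eq_of_eq_mul_left hb h2').symm
    rw [← Finset.sum_congr rfl hfiber, ← hcard, hdeg]

end Aux

/-! #### Paths and distances in the quotient -/

section Dist

variable {V : Type*} {T : SimpleGraph V} {Λ : Subgroup (Equiv.Perm V)}

lemma adjQ_of_adj {a b : V} (h : T.Adj a b) : AdjQ T Λ (πV Λ a) (πV Λ b) :=
  ⟨πE T Λ ⟨(a, b), h⟩, tailQ_πE _, headQ_πE _⟩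

lemma adjQ_symm {u v : VQ Λ} (h : AdjQ T Λ u v) : AdjQ T Λ v u := by
  obtain ⟨e, he1, he2⟩ := h
  exact ⟨barQ T Λ e, by rw [tailQ_barQ, he2], by rw [headQ_barQ, he1]⟩

lemma pathlike_nonempty (hconn : T.Connected) (u v : VQ Λ) :
    {n : ℕ | ∃ f : ℕ → VQ Λ, f 0 = u ∧ f n = v ∧ ∀ i < n, AdjQ T Λ (f i) (f (i + 1))}.Nonempty := by
  have key : ∀ {a b : V}, T.Walk a b → ∃ n, ∃ f : ℕ → VQ Λ, f 0 = πV Λ a ∧ f n = πV Λ b ∧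
      ∀ i < n, AdjQ T Λ (f i) (f (i + 1)) := by
    intro a b w
    induction w with
    | nil => exact ⟨0, fun _ => πV Λ _, rfl, rfl, fun i hi => absurd hi (by omega)⟩
    | @cons x y z h p ih =>
      obtain ⟨n, f, hf0, hfn, hadj⟩ := ih
      refine ⟨n + 1, fun i => if i = 0 then πV Λ x else f (i - 1), by simp, by simp [hfn], ?_⟩
      intro i hi
      rcases Nat.eq_zero_or_pos i with rfl | hpos
      · simpa [hf0] using adjQ_of_adj (Λ := Λ) h
      · have h1 : ¬ (i = 0) := by omega
        have h2 : ¬ (i + 1 = 0) := by omega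
        simp only [if_neg h1, if_neg h2]
        have h3 := hadj (i - 1) (by omega)
        have e1 : i - 1 + 1 = i := by omega
        rw [e1] at h3
        simpa using h3
  refine (hconn.preconnected (Quot.out u) (Quot.out v)).elim (fun w => ?_)
  obtain ⟨n, f, h0, hn, hadj⟩ := key w
  exact ⟨n, f, by rwa [πV_out] at h0, by rwa [πV_out] at hn, hadj⟩

lemma distQ_mem (hconn : T.Connected) (u v : VQ Λ) :
    ∃ f : ℕ → VQ Λ, f 0 = u ∧ f (distQ T Λ u v) = v ∧
      ∀ i < distQ T Λ u v, AdjQ T Λ (f i) (f (i + 1)) :=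
  Nat.sInf_mem (pathlike_nonempty hconn u v)

lemma distQ_le {u v : VQ Λ} {n : ℕ} (f : ℕ → VQ Λ) (h0 : f 0 = u) (hn : f n = v)
    (hadj : ∀ i < n, AdjQ T Λ (f i) (f (i + 1))) : distQ T Λ u v ≤ n :=
  Nat.sInf_le ⟨f, h0, hn, hadj⟩

lemma distQ_eq_zero_imp (hconn : T.Connected) {u v : VQ Λ} (h : distQ T Λ u v = 0) : u = v := by
  obtain ⟨f, h0, hn, -⟩ := distQ_mem (Λ := Λ) hconn u v
  rw [h] at hn
  rw [← h0, ← hn]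

variable {F : Finset (VQ Λ)}

lemma distToF_attained (hFne : F.Nonempty) (v : VQ Λ) :
    ∃ u ∈ F, distQ T Λ u v = distToF T Λ F v := by
  obtain ⟨u, hu⟩ := hFne
  exact Nat.sInf_mem (⟨distQ T Λ u v, u, hu, rfl⟩ :
    {n : ℕ | ∃ u ∈ F, distQ T Λ u v = n}.Nonempty)

lemma distToF_le_of_mem {u : VQ Λ} (hu : u ∈ F) (v : VQ Λ) :
    distToF T Λ F v ≤ distQ T Λ u v :=
  Nat.sInf_le ⟨u, hu, rfl⟩

lemma distToF_eq_zero_iff (hconn : T.Connected) (hFne : F.Nonempty) (v : VQ Λ) :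
    distToF T Λ F v = 0 ↔ v ∈ F := by
  constructor
  · intro h
    obtain ⟨u, hu, hd⟩ := distToF_attained hFne v
    rw [h] at hd
    rwa [← distQ_eq_zero_imp hconn hd]
  · intro h
    have h0 : distQ T Λ v v ≤ 0 :=
      distQ_le (fun _ => v) rfl rfl (fun i hi => absurd hi (by omega))
    have h1 := distToF_le_of_mem (T := T) h v
    omega

lemma distToF_adj_le (hconn : T.Connected) (hFne : F.Nonempty) {a b : VQ Λ}
    (h : AdjQ T Λ a b) : distToF T Λ F b ≤ distToF T Λ F a + 1 := by
  obtain ⟨u, hu, hd⟩ := distToF_attained (T := T) hFne a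
  obtain ⟨f, h0, hn, hadj⟩ := distQ_mem hconn u a
  have hle : distQ T Λ u b ≤ distQ T Λ u a + 1 := by
    refine distQ_le (fun i => if i ≤ distQ T Λ u a then f i else b) (by simp [h0])
      (if_neg (by omega)) ?_
    intro i hi
    show AdjQ T Λ (if i ≤ distQ T Λ u a then f i else b)
      (if i + 1 ≤ distQ T Λ u a then f (i + 1) else b)
    rcases Nat.lt_or_ge i (distQ T Λ u a) with hin | hin
    · have e1 : i ≤ distQ T Λ u a := by omega
      have e2 : i + 1 ≤ distQ T Λ u a := by omega
      rw [if_pos e1, if_pos e2]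
      exact hadj i hin
    · have e3 : i = distQ T Λ u a := by omega
      rw [if_pos (by omega : i ≤ distQ T Λ u a), if_neg (by omega : ¬ (i + 1 ≤ distQ T Λ u a))]
      rw [e3, hn]
      exact h
  have h5 := distToF_le_of_mem (T := T) hu b
  omega

end Dist

/-! #### Degrees of adjacent vertices in the quotient -/

section Deg

variable {V : Type*} {T : SimpleGraph V} {Λ : Subgroup (Equiv.Perm V)} {d₁ d₂ : ℕ}

lemma nbr_card_smul (hΛaut : ∀ γ ∈ Λ, IsTreeAut T γ) {γ : Equiv.Perm V} (hγ : γ ∈ Λ) (a : V) :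
    Nat.card (T.neighborSet (γ a)) = Nat.card (T.neighborSet a) := by
  refine Nat.card_congr (Equiv.symm ⟨fun w => ⟨γ w.1, ?_⟩, fun w => ⟨γ⁻¹ w.1, ?_⟩, ?_, ?_⟩)
  · exact ((hΛaut γ hγ).1 a w.1).mpr w.2
  · have h := (hΛaut γ hγ).1 (γ⁻¹ (γ a)) (γ⁻¹ w.1)
    rw [Equiv.Perm.apply_inv_self, Equiv.Perm.apply_inv_self] at h
    have h2 : T.Adj (γ a) w.1 := w.2
    rw [Equiv.Perm.inv_apply_self] at h
    exact h.mp h2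
  · intro w
    apply Subtype.ext
    exact Equiv.Perm.inv_apply_self γ w.1
  · intro w
    apply Subtype.ext
    exact Equiv.Perm.apply_inv_self γ w.1

lemma degQ_lift (hΛaut : ∀ γ ∈ Λ, IsTreeAut T γ) {x : V} {u : VQ Λ} (h : πV Λ x = u) :
    Nat.card (T.neighborSet x) = degQ T Λ u := by
  have h2 : πV Λ x = πV Λ (Quot.out u) := by rw [h, πV_out]
  obtain ⟨γ, hγ, hγx⟩ := πV_eq_iff.mp h2
  unfold degQ
  rw [← hγx]
  exact (nbr_card_smul hΛaut hγ x).symm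

lemma adjQ_degs (hT : IsBiregularTree T d₁ d₂) (hΛaut : ∀ γ ∈ Λ, IsTreeAut T γ)
    {u v : VQ Λ} (h : AdjQ T Λ u v) :
    (degQ T Λ u = d₁ ∧ degQ T Λ v = d₂) ∨ (degQ T Λ u = d₂ ∧ degQ T Λ v = d₁) := by
  obtain ⟨g, hg1, hg2⟩ := h
  set E := Quot.out g with hE
  have hu : πV Λ E.1.1 = u := hg1
  have hv : πV Λ E.1.2 = v := hg2
  obtain ⟨-, -, c, hc, h1, h2⟩ := hT
  have hadj : T.Adj E.1.1 E.1.2 := E.2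
  have hne := hc _ _ hadj
  rcases Bool.eq_false_or_eq_true (c E.1.1) with hcx | hcx
  · have h4 : c E.1.2 = false := by
      rcases Bool.eq_false_or_eq_true (c E.1.2) with h4 | h4
      · exact absurd (by rw [hcx, h4]) hne
      · exact h4
    left
    constructor
    · rw [← degQ_lift hΛaut hu]; exact h1 _ hcx
    · rw [← degQ_lift hΛaut hv]; exact h2 _ h4
  · have h4 : c E.1.2 = true := by
      rcases Bool.eq_false_or_eq_true (c E.1.2) with h4 | h4
      · exact h4
      · exact absurd (by rw [hcx, h4]) hne
    right
    constructor
    · rw [← degQ_lift hΛaut hu]; exact h2 _ hcx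
    · rw [← degQ_lift hΛaut hv]; exact h1 _ h4

end Deg

/-! #### Basic properties of the kernel and hitting probabilities -/

section Prob

variable {V : Type*} {T : SimpleGraph V} {Λ : Subgroup (Equiv.Perm V)}
variable {d₁ d₂ : ℕ} {F : Finset (VQ Λ)}

lemma kerP_nonneg (hd₁ : 3 ≤ d₁) (hd₂ : 3 ≤ d₂) (hT : IsBiregularTree T d₁ d₂)
    (hΛfin : ∀ v : V, Finite {γ : Λ // (γ : Equiv.Perm V) v = v})
    (e f : EQ T Λ) : 0 ≤ kerP T Λ e f := by
  unfold kerP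
  have hdeg := three_le_degQ (Λ := Λ) hd₁ hd₂ hT (headQ T Λ e)
  have hD : (0:ℝ) ≤ (degQ T Λ (headQ T Λ e) : ℝ) - 1 := by
    have hc : (3:ℝ) ≤ (degQ T Λ (headQ T Λ e) : ℝ) := by exact_mod_cast hdeg
    linarith
  split
  · apply div_nonneg _ hD
    split
    · have h1 := one_le_indQ hΛfin f
      have h2 : (1:ℝ) ≤ (indQ T Λ f : ℝ) := by exact_mod_cast h1
      linarith
    · positivity
  · exact le_refl 0

lemma kerP_eq_zero_of_ne {e f : EQ T Λ} (h : ¬ (headQ T Λ e = tailQ T Λ f)) :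
    kerP T Λ e f = 0 := by
  unfold kerP
  rw [if_neg h]

lemma sum_kerP_eq_one (hd₁ : 3 ≤ d₁) (hd₂ : 3 ≤ d₂) (hT : IsBiregularTree T d₁ d₂)
    (e : EQ T Λ) (Fs : Finset (EQ T Λ))
    (hFs : ∀ f, f ∈ Fs ↔ tailQ T Λ f = headQ T Λ e)
    (hsum : ∑ f ∈ Fs, indQ T Λ f = degQ T Λ (headQ T Λ e)) :
    ∑ f ∈ Fs, kerP T Λ e f = 1 := by
  classical
  have hdeg := three_le_degQ (Λ := Λ) hd₁ hd₂ hT (headQ T Λ e)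
  have hdegR : (3:ℝ) ≤ (degQ T Λ (headQ T Λ e) : ℝ) := by exact_mod_cast hdeg
  set D : ℝ := (degQ T Λ (headQ T Λ e) : ℝ) - 1 with hD
  have hDpos : 0 < D := by rw [hD]; linarith
  have hD0 : D ≠ 0 := ne_of_gt hDpos
  have hstep : ∀ f ∈ Fs, kerP T Λ e f =
      (indQ T Λ f : ℝ) / D - (if f = barQ T Λ e then 1 / D else 0) := by
    intro f hf
    unfold kerP
    rw [if_pos ((hFs f).mp hf).symm]
    by_cases hb : f = barQ T Λ e
    · rw [if_pos hb, if_pos hb, ← hD]; ring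
    · rw [if_neg hb, if_neg hb, ← hD]; ring
  rw [Finset.sum_congr rfl hstep, Finset.sum_sub_distrib]
  have hbar : barQ T Λ e ∈ Fs := (hFs _).mpr (tailQ_barQ e)
  rw [Finset.sum_ite_eq' Fs (barQ T Λ e) (fun _ => 1 / D), if_pos hbar]
  rw [← Finset.sum_div]
  have hcast : ∑ f ∈ Fs, (indQ T Λ f : ℝ) = (degQ T Λ (headQ T Λ e) : ℝ) := by
    exact_mod_cast congrArg (Nat.cast : ℕ → ℝ) hsum
  rw [hcast, div_sub_div_same, ← hD, div_self hD0]

lemma hitP_succ_eq (i : ℕ) (e : EQ T Λ) :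
    hitP T Λ F (i + 1) e = if headQ T Λ e ∈ F then 0 else
      ∑' f, kerP T Λ e f * hitP T Λ F i f := rfl

lemma hitP_mem_F {i : ℕ} (hi : 1 ≤ i) {e : EQ T Λ} (he : headQ T Λ e ∈ F) :
    hitP T Λ F i e = 0 := by
  obtain ⟨i', rfl⟩ : ∃ i', i = i' + 1 := ⟨i - 1, by omega⟩
  rw [hitP_succ_eq, if_pos he]

lemma hitP_succ_sum (hd₁ : 3 ≤ d₁) (hd₂ : 3 ≤ d₂) (hT : IsBiregularTree T d₁ d₂)
    {i : ℕ} {e : EQ T Λ} (hm : headQ T Λ e ∉ F) (Fs : Finset (EQ T Λ))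
    (hFs : ∀ f, f ∈ Fs ↔ tailQ T Λ f = headQ T Λ e) :
    hitP T Λ F (i + 1) e = ∑ f ∈ Fs, kerP T Λ e f * hitP T Λ F i f := by
  rw [hitP_succ_eq, if_neg hm]
  refine tsum_eq_sum ?_
  intro f hf
  rw [kerP_eq_zero_of_ne (fun hc => hf ((hFs f).mpr hc.symm)), zero_mul]

lemma hitP_bounds01 (hd₁ : 3 ≤ d₁) (hd₂ : 3 ≤ d₂) (hT : IsBiregularTree T d₁ d₂)
    (hΛaut : ∀ γ ∈ Λ, IsTreeAut T γ)
    (hΛfin : ∀ v : V, Finite {γ : Λ // (γ : Equiv.Perm V) v = v}) :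
    ∀ (i : ℕ) (e : EQ T Λ), 0 ≤ hitP T Λ F i e ∧ hitP T Λ F i e ≤ 1 := by
  intro i
  induction i with
  | zero =>
    intro e
    by_cases hm : headQ T Λ e ∈ F <;> simp [hitP, hm]
  | succ i ih =>
    intro e
    by_cases hm : headQ T Λ e ∈ F
    · rw [hitP_succ_eq, if_pos hm]
      norm_num
    · obtain ⟨Fs, hFs, hFsum⟩ := edge_finset_exists hd₁ hd₂ hT hΛaut hΛfin (headQ T Λ e)
      rw [hitP_succ_sum hd₁ hd₂ hT hm Fs hFs]
      constructor
      · apply Finset.sum_nonneg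
        intro f hf
        exact mul_nonneg (kerP_nonneg hd₁ hd₂ hT hΛfin e f) (ih f).1
      · calc ∑ f ∈ Fs, kerP T Λ e f * hitP T Λ F i f
            ≤ ∑ f ∈ Fs, kerP T Λ e f * 1 := by
              refine Finset.sum_le_sum (fun f hf => ?_)
              exact mul_le_mul_of_nonneg_left (ih f).2 (kerP_nonneg hd₁ hd₂ hT hΛfin e f)
          _ = 1 := by
              simp only [mul_one]
              exact sum_kerP_eq_one hd₁ hd₂ hT e Fs hFs hFsum

lemma hitP_zero_of_lt (hconn : T.Connected) (hFne : F.Nonempty) :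
    ∀ (i : ℕ) (e : EQ T Λ), i < distToF T Λ F (headQ T Λ e) → hitP T Λ F i e = 0 := by
  intro i
  induction i with
  | zero =>
    intro e h
    have hne : headQ T Λ e ∉ F := by
      intro hm
      rw [(distToF_eq_zero_iff hconn hFne _).mpr hm] at h
      omega
    simp [hitP, hne]
  | succ i ih =>
    intro e h
    have hne : headQ T Λ e ∉ F := by
      intro hm
      rw [(distToF_eq_zero_iff hconn hFne _).mpr hm] at h
      omega
    have hz : ∀ f : EQ T Λ, kerP T Λ e f * hitP T Λ F i f = 0 := by
      intro f
      by_cases hk : kerP T Λ e f = 0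
      · rw [hk, zero_mul]
      · have htf : headQ T Λ e = tailQ T Λ f := by
          by_contra hc
          exact hk (kerP_eq_zero_of_ne hc)
        have hadj : AdjQ T Λ (headQ T Λ f) (headQ T Λ e) :=
          ⟨barQ T Λ f, tailQ_barQ f, by rw [headQ_barQ, ← htf]⟩
        have hd := distToF_adj_le (F := F) hconn hFne hadj
        rw [ih f (by omega), mul_zero]
    rw [hitP_succ_eq, if_neg hne]
    rw [show (fun f => kerP T Λ e f * hitP T Λ F i f) = fun _ => (0:ℝ) from funext hz]
    exact tsum_zero

end Prob

/-! #### The main hitting-probability bound -/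

section Main

variable {V : Type*} {T : SimpleGraph V} {Λ : Subgroup (Equiv.Perm V)}
variable {d₁ d₂ : ℕ} {F : Finset (VQ Λ)}

lemma hitP_le_bound (hd₁ : 3 ≤ d₁) (hd₂ : 3 ≤ d₂) (hT : IsBiregularTree T d₁ d₂)
    (hΛ : IsTreeLattice T Λ) (hFne : F.Nonempty) (hFpart : IsFinitePart T Λ F) :
    ∀ (i : ℕ) (e : EQ T Λ),
      hitP T Λ F i e ≤ ((min d₁ d₂ - 1 : ℕ) : ℝ) ^
        (-(((i - distToF T Λ F (headQ T Λ e)) / 2 : ℕ) : ℤ)) := by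
  obtain ⟨hΛaut, hΛfin, -⟩ := hΛ
  have hconn := hT.1
  obtain ⟨k, ray, hbij, hinj, hE, hU, h5, hind1, hind7⟩ := hFpart
  set Q : ℝ := ((min d₁ d₂ - 1 : ℕ) : ℝ) with hQdef
  have hQl : 1 ≤ min d₁ d₂ - 1 := by omega
  have hQ1 : (1:ℝ) ≤ Q := by rw [hQdef]; exact_mod_cast hQl
  have hQ0 : (0:ℝ) < Q := lt_of_lt_of_le one_pos hQ1
  have hQne : Q ≠ 0 := ne_of_gt hQ0
  -- basic ray facts
  have Hnot : ∀ (j : Fin k) (n : ℕ), ray j n ∉ F := fun j n => (hbij _).mpr ⟨j, n, rfl⟩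
  have HadjR : ∀ (j : Fin k) (n : ℕ), AdjQ T Λ (ray j n) (ray j (n + 1)) := by
    intro j n
    obtain ⟨g, hg1, hg2⟩ := hE j n
    exact ⟨g, hg1, hg2⟩
  have Efwd : ∀ (j : Fin k) (n : ℕ), ∃ g : EQ T Λ, tailQ T Λ g = ray j n ∧
      headQ T Λ g = ray j (n + 1) ∧ indQ T Λ g = 1 := by
    intro j n
    obtain ⟨g, hg1, hg2⟩ := hE j n
    exact ⟨g, hg1, hg2, hind1 j n g hg1 hg2⟩
  have Ebwd : ∀ (j : Fin k) (n : ℕ), ∃ g : EQ T Λ, tailQ T Λ g = ray j (n + 1) ∧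
      headQ T Λ g = ray j n ∧ indQ T Λ g = degQ T Λ (ray j n) - 1 := by
    intro j n
    obtain ⟨g, hg1, hg2⟩ := hE j n
    refine ⟨barQ T Λ g, by rw [tailQ_barQ, hg2], by rw [headQ_barQ, hg1], ?_⟩
    exact hind7 j n _ (by rw [tailQ_barQ, hg2]) (by rw [headQ_barQ, hg1])
  -- degrees are monotone, hence constant, along rays
  have Hmono : ∀ (j : Fin k) (n : ℕ), degQ T Λ (ray j n) ≤ degQ T Λ (ray j (n + 1)) := by
    intro j n
    obtain ⟨Fs, hFs, hFsum⟩ := edge_finset_exists hd₁ hd₂ hT hΛaut hΛfin (ray j (n + 1))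
    obtain ⟨gf, hgf1, hgf2, hgf3⟩ := Efwd j (n + 1)
    obtain ⟨gb, hgb1, hgb2, hgb3⟩ := Ebwd j n
    have hne : gf ≠ gb := by
      intro hcon
      have h7 : ray j (n + 1 + 1) = ray j n := by rw [← hgf2, hcon, hgb2]
      exact absurd (hinj _ _ _ _ h7).2 (by omega)
    have hsub : ({gf, gb} : Finset (EQ T Λ)) ⊆ Fs := by
      intro x hx
      rcases Finset.mem_insert.mp hx with h | h
      · rw [h]; exact (hFs gf).mpr hgf1
      · rw [Finset.mem_singleton] at h; rw [h]; exact (hFs gb).mpr hgb1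
    have hsum2 : indQ T Λ gf + indQ T Λ gb ≤ ∑ f ∈ Fs, indQ T Λ f := by
      rw [← Finset.sum_pair hne]
      exact Finset.sum_le_sum_of_subset hsub
    have hd3 := three_le_degQ (Λ := Λ) hd₁ hd₂ hT (ray j n)
    rw [hFsum, hgf3, hgb3] at hsum2
    omega
  have Hd12 : Fin k → d₁ = d₂ := by
    intro j
    have m0 := Hmono j 0
    have m1 := Hmono j 1
    have a01 := adjQ_degs hT hΛaut (HadjR j 0)
    have a12 := adjQ_degs hT hΛaut (HadjR j 1)
    have e10 : (0:ℕ) + 1 = 1 := rfl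
    have e21 : (1:ℕ) + 1 = 2 := rfl
    simp only [e10, e21] at m0 m1 a01 a12
    rcases a01 with ⟨x0, x1⟩ | ⟨x0, x1⟩ <;> rcases a12 with ⟨y1, y2⟩ | ⟨y1, y2⟩ <;> omega
  have Hdeg : ∀ (j : Fin k) (n : ℕ), degQ T Λ (ray j n) = d₁ := by
    intro j n
    have h12 := Hd12 j
    rcases adjQ_degs hT hΛaut (HadjR j n) with ⟨x, -⟩ | ⟨x, -⟩ <;> omega
  -- no edges from deep ray vertices into F
  have Hnoshort : ∀ (j : Fin k) (n : ℕ) (g : EQ T Λ),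
      tailQ T Λ g = ray j (n + 1) → headQ T Λ g ∈ F → False := by
    intro j n g hg1 hg2
    obtain ⟨Fs, hFs, hFsum⟩ := edge_finset_exists hd₁ hd₂ hT hΛaut hΛfin (ray j (n + 1))
    obtain ⟨gf, hgf1, hgf2, hgf3⟩ := Efwd j (n + 1)
    obtain ⟨gb, hgb1, hgb2, hgb3⟩ := Ebwd j n
    have hne1 : gf ≠ gb := by
      intro hcon
      have h7 : ray j (n + 1 + 1) = ray j n := by rw [← hgf2, hcon, hgb2]
      exact absurd (hinj _ _ _ _ h7).2 (by omega)
    have hne2 : g ≠ gf := fun hcon => (Hnot j (n + 1 + 1)) (by rw [← hgf2, ← hcon]; exact hg2)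
    have hne3 : g ≠ gb := fun hcon => (Hnot j n) (by rw [← hgb2, ← hcon]; exact hg2)
    have hm1 : gf ∉ ({gb, g} : Finset (EQ T Λ)) := by
      simp only [Finset.mem_insert, Finset.mem_singleton]
      push_neg
      exact ⟨hne1, fun h => hne2 h.symm⟩
    have hm2 : gb ∉ ({g} : Finset (EQ T Λ)) := by
      simp only [Finset.mem_singleton]
      exact fun h => hne3 h.symm
    have htr : ∑ f ∈ ({gf, gb, g} : Finset (EQ T Λ)), indQ T Λ f =
        indQ T Λ gf + (indQ T Λ gb + indQ T Λ g) := by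
      rw [Finset.sum_insert hm1, Finset.sum_insert hm2, Finset.sum_singleton]
    have hsub : ({gf, gb, g} : Finset (EQ T Λ)) ⊆ Fs := by
      intro x hx
      simp only [Finset.mem_insert, Finset.mem_singleton] at hx
      rcases hx with h | h | h
      · rw [h]; exact (hFs gf).mpr hgf1
      · rw [h]; exact (hFs gb).mpr hgb1
      · rw [h]; exact (hFs g).mpr hg1
    have hsum3 := Finset.sum_le_sum_of_subset (f := indQ T Λ) hsub
    rw [htr, hFsum, hgf3, hgb3] at hsum3
    have hd3 := three_le_degQ (Λ := Λ) hd₁ hd₂ hT (ray j n)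
    have hig := one_le_indQ hΛfin g
    have e1 := Hdeg j n
    have e2 := Hdeg j (n + 1)
    omega
  -- exact distances to F along rays
  have HdistLE : ∀ (j : Fin k) (n : ℕ), distToF T Λ F (ray j n) ≤ n + 1 := by
    intro j n
    induction n with
    | zero =>
      obtain ⟨Fs, hFs, hFsum⟩ := edge_finset_exists hd₁ hd₂ hT hΛaut hΛfin (ray j 0)
      obtain ⟨gf, hgf1, hgf2, hgf3⟩ := Efwd j 0
      have hex : ∃ g ∈ Fs, headQ T Λ g ∈ F := by
        by_contra hcon
        push_neg at hcon
        have hsub : Fs ⊆ ({gf} : Finset (EQ T Λ)) := by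
          intro g hg
          have hg1 := (hFs g).mp hg
          rcases h5 j 0 g hg1 (hcon g hg) with hfw | ⟨m, hm, -⟩
          · exact Finset.mem_singleton.mpr (hU j 0 g gf hg1 hfw hgf1 hgf2)
          · omega
        have hle := Finset.sum_le_sum_of_subset (f := indQ T Λ) hsub
        rw [hFsum, Finset.sum_singleton, hgf3] at hle
        have := three_le_degQ (Λ := Λ) hd₁ hd₂ hT (ray j 0)
        omega
      obtain ⟨g, hg, hgF⟩ := hex
      have hadj : AdjQ T Λ (headQ T Λ g) (ray j 0) :=
        adjQ_symm ⟨g, (hFs g).mp hg, rfl⟩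
      have hb := distToF_adj_le hconn hFne hadj
      rw [(distToF_eq_zero_iff hconn hFne _).mpr hgF] at hb
      omega
    | succ n ih =>
      have hb := distToF_adj_le hconn hFne (HadjR j n)
      omega
  have HdistGE : ∀ (j : Fin k) (m : ℕ), m + 1 ≤ distToF T Λ F (ray j m) := by
    intro j m
    obtain ⟨u, hu, hd⟩ := distToF_attained (T := T) hFne (ray j m)
    obtain ⟨f, h0, hn, hadj⟩ := distQ_mem hconn u (ray j m)
    set L := distQ T Λ u (ray j m) with hL
    have key : ∀ s, s ≤ L → ∀ (j' : Fin k) (p : ℕ), f s = ray j' p → p + 1 ≤ s := by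
      intro s
      induction s with
      | zero =>
        intro hs j' p hf
        have h7 : u = ray j' p := by rw [← h0, hf]
        exact absurd (h7 ▸ hu) (Hnot j' p)
      | succ s ih2 =>
        intro hs j' p hf
        obtain ⟨g, hg1, hg2⟩ := hadj s (by omega)
        by_cases hsF : f s ∈ F
        · rcases Nat.eq_zero_or_pos p with rfl | hp
          · omega
          · obtain ⟨p', rfl⟩ : ∃ p', p = p' + 1 := ⟨p - 1, by omega⟩
            exact (Hnoshort j' p' (barQ T Λ g)
              (by rw [tailQ_barQ, hg2, hf])
              (by rw [headQ_barQ, hg1]; exact hsF)).elim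
        · obtain ⟨j'', q, hq⟩ := (hbij (f s)).mp hsF
          have hgt : tailQ T Λ g = ray j'' q := by rw [hg1]; exact hq.symm
          have hgh : headQ T Λ g ∉ F := by rw [hg2, hf]; exact Hnot j' p
          rcases h5 j'' q g hgt hgh with hfw | ⟨mm, hmm, hbw⟩
          · have h7 : ray j' p = ray j'' (q + 1) := by rw [← hf, ← hg2]; exact hfw
            obtain ⟨hj, hp⟩ := hinj _ _ _ _ h7
            have hq1 := ih2 (by omega) j'' q hq.symm
            omega
          · have h7 : ray j' p = ray j'' mm := by rw [← hf, ← hg2]; exact hbw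
            obtain ⟨hj, hp⟩ := hinj _ _ _ _ h7
            have hq1 := ih2 (by omega) j'' q hq.symm
            omega
    have hge := key L (le_refl L) j m hn
    omega
  have Hdist : ∀ (j : Fin k) (n : ℕ), distToF T Λ F (ray j n) = n + 1 := fun j n =>
    le_antisymm (HdistLE j n) (HdistGE j n)
  -- backward edges die except at their exact hitting time
  have Claim3 : ∀ (i : ℕ) (j : Fin k) (n : ℕ) (f : EQ T Λ),
      tailQ T Λ f = ray j (n + 1) → headQ T Λ f = ray j n → i ≠ n + 1 →
      hitP T Λ F i f = 0 := by
    intro i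
    induction i with
    | zero =>
      intro j n f ht hh hne
      have hmem : headQ T Λ f ∉ F := by rw [hh]; exact Hnot j n
      simp [hitP, hmem]
    | succ i ih =>
      intro j n f ht hh hne
      have hmem : headQ T Λ f ∉ F := by rw [hh]; exact Hnot j n
      obtain ⟨Fs, hFs, hFsum⟩ := edge_finset_exists hd₁ hd₂ hT hΛaut hΛfin (headQ T Λ f)
      rw [hitP_succ_sum hd₁ hd₂ hT hmem Fs hFs]
      refine Finset.sum_eq_zero (fun g hg => ?_)
      have hg1 : tailQ T Λ g = ray j n := by rw [(hFs g).mp hg, hh]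
      by_cases hgF : headQ T Λ g ∈ F
      · rcases Nat.eq_zero_or_pos n with rfl | hn
        · rw [hitP_mem_F (by omega) hgF, mul_zero]
        · obtain ⟨n', rfl⟩ : ∃ n', n = n' + 1 := ⟨n - 1, by omega⟩
          exact (Hnoshort j n' g hg1 hgF).elim
      · rcases h5 j n g hg1 hgF with hfw | ⟨m, hmval, hbw⟩
        · have hgbar : g = barQ T Λ f :=
            hU j n g (barQ T Λ f) hg1 hfw (by rw [tailQ_barQ, hh]) (by rw [headQ_barQ, ht])
          have hind : indQ T Λ g = 1 := hind1 j n g hg1 hfw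
          have hker : kerP T Λ f g = 0 := by
            unfold kerP
            rw [if_pos (by rw [hg1, hh]), if_pos hgbar, hind]
            norm_num
          rw [hker, zero_mul]
        · subst hmval
          rw [ih j m g hg1 hbw (by omega), mul_zero]
  -- the main induction
  intro i
  induction i with
  | zero =>
    intro e
    by_cases hm : headQ T Λ e ∈ F
    · have h1 : hitP T Λ F 0 e = 1 := by simp [hitP, hm]
      rw [h1]
      simp
    · have h1 : hitP T Λ F 0 e = 0 := by simp [hitP, hm]
      rw [h1]
      exact le_of_lt (zpow_pos hQ0 _)
  | succ i ih =>
    intro e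
    by_cases hm : headQ T Λ e ∈ F
    · rw [hitP_mem_F (by omega) hm]
      exact le_of_lt (zpow_pos hQ0 _)
    · obtain ⟨j, n, hjn⟩ := (hbij (headQ T Λ e)).mp hm
      rw [← hjn, Hdist j n]
      obtain ⟨Fs, hFs, hFsum⟩ := edge_finset_exists hd₁ hd₂ hT hΛaut hΛfin (headQ T Λ e)
      rw [hitP_succ_sum hd₁ hd₂ hT hm Fs hFs]
      by_cases hi : i = n
      · have hrhs : (i + 1 - (n + 1)) / 2 = 0 := by omega
        rw [hrhs]
        simp only [Nat.cast_zero, neg_zero, zpow_zero]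
        calc ∑ f ∈ Fs, kerP T Λ e f * hitP T Λ F i f
            ≤ ∑ f ∈ Fs, kerP T Λ e f * 1 := Finset.sum_le_sum (fun f _ =>
              mul_le_mul_of_nonneg_left (hitP_bounds01 hd₁ hd₂ hT hΛaut hΛfin i f).2
                (kerP_nonneg hd₁ hd₂ hT hΛfin e f))
          _ = 1 := by
              simp only [mul_one]
              exact sum_kerP_eq_one hd₁ hd₂ hT e Fs hFs hFsum
      · obtain ⟨gf, hgf1', hgf2, hgf3⟩ := Efwd j n
        have hgf1 : tailQ T Λ gf = headQ T Λ e := by rw [hgf1', hjn]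
        have hgfF : gf ∈ Fs := (hFs gf).mpr hgf1
        have hterm : ∀ f ∈ Fs, kerP T Λ e f * hitP T Λ F i f ≤
            (if f = gf then Q⁻¹ * Q ^ (-(((i - (n + 2)) / 2 : ℕ) : ℤ)) else 0) := by
          intro f hf
          have hf1 : tailQ T Λ f = ray j n := by rw [(hFs f).mp hf, ← hjn]
          by_cases hfgf : f = gf
          · subst hfgf
            rw [if_pos rfl]
            have hdegv : degQ T Λ (headQ T Λ e) = d₁ := by rw [← hjn]; exact Hdeg j n
            have h12 := Hd12 j
            have hDQ : (degQ T Λ (headQ T Λ e) : ℝ) - 1 = Q := by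
              rw [hdegv, hQdef]
              have hmin : min d₁ d₂ - 1 = d₁ - 1 := by omega
              rw [hmin, Nat.cast_sub (by omega : 1 ≤ d₁), Nat.cast_one]
            have hker : kerP T Λ e f ≤ Q⁻¹ := by
              unfold kerP
              rw [if_pos hgf1.symm, hgf3, hDQ]
              split
              · have h9 : (((1:ℕ):ℝ) - 1) = 0 := by norm_num
                rw [h9, zero_div]
                positivity
              · rw [Nat.cast_one, one_div]
            have hhit : hitP T Λ F i f ≤ Q ^ (-(((i - (n + 2)) / 2 : ℕ) : ℤ)) := by
              have h8 := ih f
              rw [hgf2, Hdist j (n + 1)] at h8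
              exact h8
            exact mul_le_mul hker hhit (hitP_bounds01 hd₁ hd₂ hT hΛaut hΛfin i f).1
              (by positivity)
          · rw [if_neg hfgf]
            by_cases hgF : headQ T Λ f ∈ F
            · rcases Nat.eq_zero_or_pos n with rfl | hn
              · rw [hitP_mem_F (by omega) hgF, mul_zero]
              · obtain ⟨n', rfl⟩ : ∃ n', n = n' + 1 := ⟨n - 1, by omega⟩
                exact (Hnoshort j n' f hf1 hgF).elim
            · rcases h5 j n f hf1 hgF with hfw | ⟨m, hmval, hbw⟩
              · exact absurd (hU j n f gf hf1 hfw hgf1' hgf2) hfgf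
              · subst hmval
                rw [Claim3 i j m f hf1 hbw (by omega), mul_zero]
        calc ∑ f ∈ Fs, kerP T Λ e f * hitP T Λ F i f
            ≤ ∑ f ∈ Fs, (if f = gf then Q⁻¹ * Q ^ (-(((i - (n + 2)) / 2 : ℕ) : ℤ)) else 0) :=
              Finset.sum_le_sum hterm
          _ = Q⁻¹ * Q ^ (-(((i - (n + 2)) / 2 : ℕ) : ℤ)) := by
              rw [Finset.sum_ite_eq' Fs gf
                (fun _ => Q⁻¹ * Q ^ (-(((i - (n + 2)) / 2 : ℕ) : ℤ))), if_pos hgfF]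
          _ ≤ Q ^ (-(((i + 1 - (n + 1)) / 2 : ℕ) : ℤ)) := by
              have hQQ : Q⁻¹ * Q ^ (-(((i - (n + 2)) / 2 : ℕ) : ℤ)) =
                  Q ^ (-(((i - (n + 2)) / 2 : ℕ) : ℤ) - 1) := by
                rw [zpow_sub_one₀ hQne, mul_comm]
              rw [hQQ]
              apply zpow_le_zpow_right₀ hQ1
              have hnat : (i + 1 - (n + 1)) / 2 ≤ (i - (n + 2)) / 2 + 1 := by omega
              have hint : (((i + 1 - (n + 1)) / 2 : ℕ) : ℤ) ≤ (((i - (n + 2)) / 2 : ℕ) : ℤ) + 1 := by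
                exact_mod_cast hnat
              linarith

end Main

/-- Lemma 3.4. Hitting time bounds for the finite part: for the Markov
chain started at `e`, writing `|e| = d(∂₁e, F)` and `q + 1 = min{d₁,d₂}`, one has
`ℙ_e(τ = i) ≤ q^{⌈(|e|-i)/2⌉}` for `i ≥ |e|` and `ℙ_e(τ = i) = 0` for `i < |e|`; the same
bound holds for `τ'` up to a multiplicative constant `C = C(d₁,d₂)`. -/
theorem hitting_time_bounds {V : Type*} (T : SimpleGraph V)
    (d₁ d₂ : ℕ) (hd₁ : 3 ≤ d₁) (hd₂ : 3 ≤ d₂) (hT : IsBiregularTree T d₁ d₂)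
    (Λ : Subgroup (Equiv.Perm V)) (hΛ : IsTreeLattice T Λ)
    (F : Finset (VQ Λ)) (hFne : F.Nonempty) (hFpart : IsFinitePart T Λ F)
    (hFmin : ∀ F' : Finset (VQ Λ), F'.Nonempty → IsFinitePart T Λ F' → F ⊆ F') :
    (∀ (e : EQ T Λ) (i : ℕ),
      (distToF T Λ F (headQ T Λ e) ≤ i →
        hitP T Λ F i e ≤
          ((min d₁ d₂ - 1 : ℕ) : ℝ) ^
            (-(((i - distToF T Λ F (headQ T Λ e)) / 2 : ℕ) : ℤ))) ∧
      (i < distToF T Λ F (headQ T Λ e) → hitP T Λ F i e = 0)) ∧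
    ∃ C : ℝ, 0 < C ∧ ∀ (e : EQ T Λ) (i : ℕ),
      distToF T Λ F (headQ T Λ e) ≤ i →
        hitP' T Λ F i e ≤
          C * ((min d₁ d₂ - 1 : ℕ) : ℝ) ^
            (-(((i - distToF T Λ F (headQ T Λ e)) / 2 : ℕ) : ℤ)) := by
  have hconn := hT.1
  constructor
  · intro e i
    exact ⟨fun _ => hitP_le_bound hd₁ hd₂ hT hΛ hFne hFpart i e,
           fun h => hitP_zero_of_lt hconn hFne i e h⟩
  · have hQl : 1 ≤ min d₁ d₂ - 1 := by omega
    have hQ1 : (1:ℝ) ≤ ((min d₁ d₂ - 1 : ℕ) : ℝ) := by exact_mod_cast hQl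
    have hQ0 : (0:ℝ) < ((min d₁ d₂ - 1 : ℕ) : ℝ) := lt_of_lt_of_le one_pos hQ1
    have hQne : ((min d₁ d₂ - 1 : ℕ) : ℝ) ≠ 0 := ne_of_gt hQ0
    refine ⟨1 + ((min d₁ d₂ - 1 : ℕ) : ℝ), by linarith, ?_⟩
    intro e i hdi
    have hBpos : (0:ℝ) < ((min d₁ d₂ - 1 : ℕ) : ℝ) ^
        (-(((i - distToF T Λ F (headQ T Λ e)) / 2 : ℕ) : ℤ)) := zpow_pos hQ0 _
    unfold hitP'
    split_ifs with h2 h1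
    · have hb1 := hitP_le_bound hd₁ hd₂ hT hΛ hFne hFpart i e
      have hb2 := hitP_le_bound hd₁ hd₂ hT hΛ hFne hFpart (i - 1) e
      have hmono : ((min d₁ d₂ - 1 : ℕ) : ℝ) ^
          (-(((i - 1 - distToF T Λ F (headQ T Λ e)) / 2 : ℕ) : ℤ)) ≤
          ((min d₁ d₂ - 1 : ℕ) : ℝ) * ((min d₁ d₂ - 1 : ℕ) : ℝ) ^
            (-(((i - distToF T Λ F (headQ T Λ e)) / 2 : ℕ) : ℤ)) := by
        have hQQ : ((min d₁ d₂ - 1 : ℕ) : ℝ) * ((min d₁ d₂ - 1 : ℕ) : ℝ) ^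
            (-(((i - distToF T Λ F (headQ T Λ e)) / 2 : ℕ) : ℤ)) =
            ((min d₁ d₂ - 1 : ℕ) : ℝ) ^
            (1 + -(((i - distToF T Λ F (headQ T Λ e)) / 2 : ℕ) : ℤ)) := by
          rw [zpow_add₀ hQne, zpow_one]
        rw [hQQ]
        apply zpow_le_zpow_right₀ hQ1
        have hnat : (i - distToF T Λ F (headQ T Λ e)) / 2 ≤
            (i - 1 - distToF T Λ F (headQ T Λ e)) / 2 + 1 := by omega
        have hint : (((i - distToF T Λ F (headQ T Λ e)) / 2 : ℕ) : ℤ) ≤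
            (((i - 1 - distToF T Λ F (headQ T Λ e)) / 2 : ℕ) : ℤ) + 1 := by
          exact_mod_cast hnat
        linarith
      have htot := add_le_add hb1 (le_trans hb2 hmono)
      calc hitP T Λ F i e + hitP T Λ F (i - 1) e ≤ _ := htot
        _ = (1 + ((min d₁ d₂ - 1 : ℕ) : ℝ)) * ((min d₁ d₂ - 1 : ℕ) : ℝ) ^
            (-(((i - distToF T Λ F (headQ T Λ e)) / 2 : ℕ) : ℤ)) := by ring
    · have hb1 := hitP_le_bound hd₁ hd₂ hT hΛ hFne hFpart i e
      have hQB : (0:ℝ) ≤ ((min d₁ d₂ - 1 : ℕ) : ℝ) * ((min d₁ d₂ - 1 : ℕ) : ℝ) ^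
          (-(((i - distToF T Λ F (headQ T Λ e)) / 2 : ℕ) : ℤ)) := by positivity
      have hexp : (1 + ((min d₁ d₂ - 1 : ℕ) : ℝ)) * ((min d₁ d₂ - 1 : ℕ) : ℝ) ^
          (-(((i - distToF T Λ F (headQ T Λ e)) / 2 : ℕ) : ℤ)) =
          ((min d₁ d₂ - 1 : ℕ) : ℝ) ^
            (-(((i - distToF T Λ F (headQ T Λ e)) / 2 : ℕ) : ℤ)) +
          ((min d₁ d₂ - 1 : ℕ) : ℝ) * ((min d₁ d₂ - 1 : ℕ) : ℝ) ^
            (-(((i - distToF T Λ F (headQ T Λ e)) / 2 : ℕ) : ℤ)) := by ring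
      rw [add_zero, hexp]
      linarith
    · positivity

end TreeDyn
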